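/- arXiv:1103.4075 — 2 statements merged into one kernel-verified Lean document; each statement's English description precedes it below -/
import Mathlib

section
/- Let q and b be complex numbers with 0 < |q| < 1, |b| < 1 and |q| < |b|². Then the bilateral sum Σ_{k∈ℤ} b^{|k|} · [(q^{1+|k|}, b²; q)_∞ / (q, q^{1+|k|}/b²; q)_∞] · ₂φ₁(q^{1+|k|}/b², q/b²; q^{1+|k|}; q, b²) equals the infinite product [(b²;q)_∞/(q/b²;q)_∞] · [(q/b;q)_∞/(b;q)_∞]². (With a = b², this is the equality I_{e,N_f=1;h} = I_{m,N_f=1;h} of superconformal indices of the three-dimensional N=2 U(1) gauge theory with one flavour of R-charge h and its mirror, a free Wess–Zumino theory.) -/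
/-!
Put `z = q / b²`, `c_M = (z;q)_M / (q;q)_M` and `v_M = c_M b^M`. Expanding the Pochhammer
symbols, the `k`-th summand is `(b²;q)_∞/(z;q)_∞ · ∑ₙ v_{|k|+n} v_n`. The map
`(M, N) ↦ (M - N, min M N)` identifies `ℕ × ℕ` with `ℤ × ℕ`, so the sum over `k` is the absolutely
convergent double series `∑_{M,N} v_M v_N = (∑ v)²`, and the `q`-binomial theorem gives
`∑_M c_M b^M = (zb;q)_∞/(b;q)_∞ = (q/b;q)_∞/(b;q)_∞`.

The `q`-binomial theorem `F(t) := ∑ c_M t^M = (zt;q)_∞/(t;q)_∞` follows from the functional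
equation `(1 - t) F(t) = (1 - zt) F(qt)`: iterating it, `(t;q)_N F(t) = (zt;q)_N F(q^N t)`, and
`F(q^N t) → F(0) = 1`.
-/
open scoped BigOperators

/-- The infinite q-Pochhammer symbol `(z;q)_∞ = ∏_{j=0}^∞ (1 - z q^j)`. -/
noncomputable def qPochInf (z q : ℂ) : ℂ := ∏' j : ℕ, (1 - z * q ^ j)

/-- The q-Pochhammer symbol `(z;q)_n = (z;q)_∞ / (z q^n;q)_∞` for `n : ℤ`. -/
noncomputable def qPochInt (z q : ℂ) (n : ℤ) : ℂ :=
  qPochInf z q / qPochInf (z * q ^ n) q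

/-- The basic hypergeometric series `₂φ₁(A,B;C;q,Z)`. -/
noncomputable def phi21 (A B C q Z : ℂ) : ℂ :=
  ∑' n : ℕ, (qPochInt A q n * qPochInt B q n) /
    (qPochInt q q n * qPochInt C q n) * Z ^ n

open Filter Finset Topology

noncomputable def qPochFin (z q : ℂ) (n : ℕ) : ℂ := ∏ j ∈ range n, (1 - z * q ^ j)

lemma qPochFin_succ (z q : ℂ) (n : ℕ) :
    qPochFin z q (n + 1) = qPochFin z q n * (1 - z * q ^ n) :=
  prod_range_succ _ n

lemma qPochFin_add (z q : ℂ) (m n : ℕ) :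
    qPochFin z q (m + n) = qPochFin z q m * qPochFin (z * q ^ m) q n := by
  simp only [qPochFin, prod_range_add, pow_add, mul_assoc, mul_comm (q ^ m)]

section QPochhammer

variable {q : ℂ}

lemma norm_pow_mul_le (hq : ‖q‖ ≤ 1) (z : ℂ) (j : ℕ) : ‖q ^ j * z‖ ≤ ‖z‖ := by
  rw [norm_mul, norm_pow]
  exact mul_le_of_le_one_left (norm_nonneg z) (pow_le_one₀ (norm_nonneg q) hq)

lemma mul_pow_ne_one {z : ℂ} (hq : ‖q‖ ≤ 1) (hz : ‖z‖ < 1) (j : ℕ) : z * q ^ j ≠ 1 := by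
  intro h
  have := (norm_pow_mul_le hq z j).trans_lt hz
  rw [mul_comm, h, norm_one] at this
  exact lt_irrefl 1 this

lemma summable_norm_mul_pow (z : ℂ) (hq : ‖q‖ < 1) : Summable fun j : ℕ => ‖z * q ^ j‖ := by
  simpa [norm_mul, norm_pow] using
    (summable_geometric_of_lt_one (norm_nonneg q) hq).mul_left ‖z‖

lemma multipliable_one_sub_mul_pow (z : ℂ) (hq : ‖q‖ < 1) : Multipliable fun j : ℕ => 1 - z * q ^ j := by
  simpa [sub_eq_add_neg] using
    multipliable_one_add_of_summable (f := fun j : ℕ => -(z * q ^ j))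
      (by simpa using summable_norm_mul_pow z hq)

lemma tendsto_qPochFin (z : ℂ) (hq : ‖q‖ < 1) :
    Tendsto (qPochFin z q) atTop (𝓝 (qPochInf z q)) :=
  (multipliable_one_sub_mul_pow z hq).hasProd.tendsto_prod_nat

lemma qPochInf_ne_zero {z : ℂ} (hq : ‖q‖ < 1) (hz : ∀ j : ℕ, z * q ^ j ≠ 1) :
    qPochInf z q ≠ 0 := by
  simpa [qPochInf, sub_eq_add_neg] using
    tprod_one_add_ne_zero_of_summable (f := fun j : ℕ => -(z * q ^ j))
      (fun j => by rw [← sub_eq_add_neg, sub_ne_zero]; exact (hz j).symm)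
      (by simpa using summable_norm_mul_pow z hq)

lemma qPochFin_ne_zero {z : ℂ} (hz : ∀ j : ℕ, z * q ^ j ≠ 1) (n : ℕ) : qPochFin z q n ≠ 0 :=
  prod_ne_zero_iff.2 fun j _ => sub_ne_zero.2 (hz j).symm

lemma qPochInf_eq_qPochFin_mul (z : ℂ) (hq : ‖q‖ < 1) (n : ℕ) :
    qPochInf z q = qPochFin z q n * qPochInf (z * q ^ n) q := by
  have h : HasProd (fun j => 1 - z * q ^ (j + n)) (qPochInf (z * q ^ n) q) := by
    convert (multipliable_one_sub_mul_pow (z * q ^ n) hq).hasProd using 2 with j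
    · ring
    · rfl
  exact (HasProd.prod_range_mul (f := fun j => 1 - z * q ^ j) h).tprod_eq

lemma qPochInt_natCast {z : ℂ} (hq : ‖q‖ < 1) (hz : ∀ j : ℕ, z * q ^ j ≠ 1) (n : ℕ) :
    qPochInt z q n = qPochFin z q n := by
  have hzn : qPochInf (z * q ^ n) q ≠ 0 :=
    qPochInf_ne_zero hq fun j => by simpa [mul_assoc, ← pow_add] using hz (n + j)
  rw [qPochInt, zpow_natCast, qPochInf_eq_qPochFin_mul z hq n, mul_div_cancel_right₀ _ hzn]

end QPochhammer

noncomputable def qBinomialCoeff (z q : ℂ) (n : ℕ) : ℂ := qPochFin z q n / qPochFin q q n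

noncomputable def qBinomialSeries (z q t : ℂ) : ℂ := ∑' n : ℕ, qBinomialCoeff z q n * t ^ n

section QBinomial

variable {q t : ℂ}

lemma exists_norm_qBinomialCoeff_le (z : ℂ) (hq : ‖q‖ < 1) :
    ∃ C, ∀ n, ‖qBinomialCoeff z q n‖ ≤ C := by
  have h := (tendsto_qPochFin z hq).div (tendsto_qPochFin q hq)
    (qPochInf_ne_zero hq (mul_pow_ne_one hq.le hq))
  obtain ⟨C, hC⟩ := isBounded_iff_forall_norm_le.1 (Metric.isBounded_range_of_tendsto _ h)
  exact ⟨C, fun n => hC _ ⟨n, rfl⟩⟩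

lemma summable_norm_qBinomialCoeff_mul_pow (z : ℂ) (hq : ‖q‖ < 1) (ht : ‖t‖ < 1) :
    Summable fun n => ‖qBinomialCoeff z q n * t ^ n‖ := by
  obtain ⟨C, hC⟩ := exists_norm_qBinomialCoeff_le z hq
  refine .of_nonneg_of_le (fun n => norm_nonneg _) (fun n => ?_)
    ((summable_geometric_of_lt_one (norm_nonneg t) ht).mul_left C)
  rw [norm_mul, norm_pow]
  exact mul_le_mul_of_nonneg_right (hC n) (by positivity)

lemma qBinomialCoeff_succ_mul (z : ℂ) (hq : ‖q‖ < 1) (n : ℕ) :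
    qBinomialCoeff z q (n + 1) * (1 - q * q ^ n) = qBinomialCoeff z q n * (1 - z * q ^ n) := by
  have h : 1 - q * q ^ n ≠ 0 := sub_ne_zero.2 (mul_pow_ne_one hq.le hq n).symm
  rw [qBinomialCoeff, qBinomialCoeff, qPochFin_succ, qPochFin_succ, ← div_div,
    div_mul_cancel₀ _ h, mul_div_right_comm]

lemma qBinomialSeries_functional (z : ℂ) (hq : ‖q‖ < 1) (ht : ‖t‖ < 1) :
    (1 - t) * qBinomialSeries z q t = (1 - z * t) * qBinomialSeries z q (q * t) := by
  have hA := (summable_norm_qBinomialCoeff_mul_pow z hq ht).of_norm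
  have hB := (summable_norm_qBinomialCoeff_mul_pow z hq
    ((norm_pow_mul_le hq.le t 1).trans_lt ht)).of_norm
  rw [pow_one] at hB
  have key : qBinomialSeries z q t - qBinomialSeries z q (q * t)
      = t * qBinomialSeries z q t - z * t * qBinomialSeries z q (q * t) := by
    rw [qBinomialSeries, qBinomialSeries, ← hA.tsum_sub hB, (hA.sub hB).tsum_eq_zero_add,
      ← tsum_mul_left, ← tsum_mul_left, ← (hA.mul_left t).tsum_sub (hB.mul_left (z * t))]
    simp only [pow_zero, sub_self, zero_add]
    refine tsum_congr fun n => ?_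
    linear_combination (t ^ (n + 1)) * qBinomialCoeff_succ_mul z hq n
  linear_combination key

lemma qPochFin_mul_qBinomialSeries (z : ℂ) (hq : ‖q‖ < 1) (ht : ‖t‖ < 1) (N : ℕ) :
    qPochFin t q N * qBinomialSeries z q t
      = qPochFin (z * t) q N * qBinomialSeries z q (q ^ N * t) := by
  induction N with
  | zero => simp [qPochFin]
  | succ N ih =>
    have step := qBinomialSeries_functional z hq ((norm_pow_mul_le hq.le t N).trans_lt ht)
    rw [← mul_assoc q, ← pow_succ'] at step
    rw [qPochFin_succ, qPochFin_succ]
    linear_combination (1 - t * q ^ N) * ih + qPochFin (z * t) q N * step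

lemma tendsto_qBinomialSeries_pow_mul (z : ℂ) (hq : ‖q‖ < 1) (ht : ‖t‖ < 1) :
    Tendsto (fun N : ℕ => qBinomialSeries z q (q ^ N * t)) atTop (𝓝 1) := by
  obtain ⟨C, hC⟩ := exists_norm_qBinomialCoeff_le z hq
  have hlim : ∀ n, Tendsto (fun N : ℕ => qBinomialCoeff z q n * (q ^ N * t) ^ n) atTop
      (𝓝 (qBinomialCoeff z q n * 0 ^ n)) := fun n => by
    simpa using (((tendsto_pow_atTop_nhds_zero_of_norm_lt_one hq).mul_const t).pow n).const_mul
      (qBinomialCoeff z q n)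
  have hbound : ∀ N n, ‖qBinomialCoeff z q n * (q ^ N * t) ^ n‖ ≤ C * ‖t‖ ^ n := fun N n => by
    rw [norm_mul, norm_pow]
    exact mul_le_mul (hC n) (pow_le_pow_left₀ (norm_nonneg _) (norm_pow_mul_le hq.le t N) n)
      (by positivity) ((norm_nonneg _).trans (hC n))
  have hsum : ∑' n, qBinomialCoeff z q n * 0 ^ n = 1 := by
    rw [tsum_eq_single 0 fun n hn => by simp [hn]]
    simp [qBinomialCoeff, qPochFin]
  exact hsum ▸ tendsto_tsum_of_dominated_convergence
    ((summable_geometric_of_lt_one (norm_nonneg t) ht).mul_left C) hlim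
    (Eventually.of_forall hbound)

theorem qBinomialSeries_eq (z : ℂ) (hq : ‖q‖ < 1) (ht : ‖t‖ < 1) :
    qBinomialSeries z q t = qPochInf (z * t) q / qPochInf t q := by
  have hL := (tendsto_qPochFin t hq).mul_const (qBinomialSeries z q t)
  have hR := (tendsto_qPochFin (z * t) hq).mul (tendsto_qBinomialSeries_pow_mul z hq ht)
  have h := tendsto_nhds_unique hL
    (hR.congr fun N => (qPochFin_mul_qBinomialSeries z hq ht N).symm)
  rw [mul_one] at h
  rw [eq_div_iff (qPochInf_ne_zero hq (mul_pow_ne_one hq.le ht)), mul_comm, h]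

end QBinomial

def natProdEquivIntNat : ℕ × ℕ ≃ ℤ × ℕ where
  toFun p := ((p.1 : ℤ) - p.2, min p.1 p.2)
  invFun p := (p.2 + p.1.toNat, p.2 + (-p.1).toNat)
  left_inv p := by ext <;> simp <;> omega
  right_inv p := by ext <;> simp; omega

lemma tsum_int_tsum_natAbs_add_mul {R : Type*} [NormedCommRing R] [CompleteSpace R]
    {v : ℕ → R} (hv : Summable fun n => ‖v n‖) :
    ∑' k : ℤ, ∑' n : ℕ, v (k.natAbs + n) * v n = (∑' n, v n) ^ 2 := by
  set e := natProdEquivIntNat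
  have he : ∀ p : ℤ × ℕ, v (p.1.natAbs + p.2) * v p.2 = v (e.symm p).1 * v (e.symm p).2 := by
    rintro ⟨k, n⟩
    simp only [e, natProdEquivIntNat, Equiv.coe_fn_symm_mk]
    rcases le_total 0 k with hk | hk
    · rw [show n + k.toNat = k.natAbs + n by omega, show n + (-k).toNat = n by omega]
    · rw [show n + k.toNat = n by omega, show n + (-k).toNat = k.natAbs + n by omega, mul_comm]
  have hF : Summable fun p : ℤ × ℕ => v (p.1.natAbs + p.2) * v p.2 :=
    (e.symm.summable_iff.2 (summable_mul_of_summable_norm hv hv)).congr fun p => (he p).symm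
  calc ∑' k : ℤ, ∑' n : ℕ, v (k.natAbs + n) * v n
      = ∑' p : ℤ × ℕ, v (p.1.natAbs + p.2) * v p.2 := hF.tsum_prod.symm
    _ = ∑' p : ℤ × ℕ, v (e.symm p).1 * v (e.symm p).2 := tsum_congr he
    _ = ∑' p : ℕ × ℕ, v p.1 * v p.2 := e.symm.tsum_eq fun p => v p.1 * v p.2
    _ = (∑' n, v n) ^ 2 := by rw [sq, tsum_mul_tsum_of_summable_norm hv hv]

lemma phi21_shifted_eq_tsum {z q : ℂ} (hq : ‖q‖ < 1) (hz : ‖z‖ < 1) (a : ℂ) (m : ℕ) :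
    qPochInf (q * q ^ m) q / (qPochInf q q * qPochInf (z * q ^ m) q) *
        phi21 (z * q ^ m) z (q * q ^ m) q a
      = (∑' n, qBinomialCoeff z q (m + n) * qBinomialCoeff z q n * a ^ n) / qPochInf z q := by
  have hz' : ∀ j : ℕ, z * q ^ j ≠ 1 := mul_pow_ne_one hq.le hz
  have hq' : ∀ j : ℕ, q * q ^ j ≠ 1 := mul_pow_ne_one hq.le hq
  have shift {w : ℂ} (hw : ∀ j : ℕ, w * q ^ j ≠ 1) (j : ℕ) : w * q ^ m * q ^ j ≠ 1 := by
    simpa only [mul_assoc, ← pow_add] using hw (m + j)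
  have hZm := qPochInf_ne_zero hq (shift hz')
  have hPm := qPochInf_ne_zero hq (shift hq')
  have hFz := qPochFin_ne_zero hz' m
  have hFq := qPochFin_ne_zero hq' m
  rw [phi21, ← tsum_mul_left, ← tsum_div_const, qPochInf_eq_qPochFin_mul q hq m,
    qPochInf_eq_qPochFin_mul z hq m]
  refine tsum_congr fun n => ?_
  have hFqn := qPochFin_ne_zero hq' n
  have hFqmn := qPochFin_ne_zero (shift hq') n
  rw [qPochInt_natCast hq (shift hz'), qPochInt_natCast hq hz', qPochInt_natCast hq hq',
    qPochInt_natCast hq (shift hq'), qBinomialCoeff, qBinomialCoeff, qPochFin_add z,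
    qPochFin_add q]
  field_simp

lemma zpow_one_add_abs (q : ℂ) (k : ℤ) : q ^ (1 + |k|) = q * q ^ k.natAbs := by
  rw [Int.abs_eq_natAbs, ← Nat.cast_one, ← Nat.cast_add, zpow_natCast, pow_add, pow_one]

lemma mirror_summand_eq {q b : ℂ} (hq : ‖q‖ < 1) (hqb : ‖q / b ^ 2‖ < 1) (k : ℤ) :
    b ^ |k| * (qPochInf (q ^ (1 + |k|)) q * qPochInf (b ^ 2) q) /
        (qPochInf q q * qPochInf (q ^ (1 + |k|) / b ^ 2) q) *
        phi21 (q ^ (1 + |k|) / b ^ 2) (q / b ^ 2) (q ^ (1 + |k|)) q (b ^ 2)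
      = qPochInf (b ^ 2) q / qPochInf (q / b ^ 2) q *
        ∑' n, qBinomialCoeff (q / b ^ 2) q (k.natAbs + n) * b ^ (k.natAbs + n) *
          (qBinomialCoeff (q / b ^ 2) q n * b ^ n) := by
  set m := k.natAbs
  set z := q / b ^ 2
  have hzm : q * q ^ m / b ^ 2 = z * q ^ m := by ring
  rw [zpow_one_add_abs, Int.abs_eq_natAbs, zpow_natCast, hzm]
  calc b ^ m * (qPochInf (q * q ^ m) q * qPochInf (b ^ 2) q) /
          (qPochInf q q * qPochInf (z * q ^ m) q) * phi21 (z * q ^ m) z (q * q ^ m) q (b ^ 2)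
      = qPochInf (b ^ 2) q * b ^ m * (qPochInf (q * q ^ m) q /
          (qPochInf q q * qPochInf (z * q ^ m) q) * phi21 (z * q ^ m) z (q * q ^ m) q (b ^ 2)) := by
        ring
    _ = qPochInf (b ^ 2) q / qPochInf z q *
          ∑' n, b ^ m * (qBinomialCoeff z q (m + n) * qBinomialCoeff z q n * (b ^ 2) ^ n) := by
        rw [phi21_shifted_eq_tsum hq hqb, tsum_mul_left]
        ring
    _ = _ := congrArg _ (tsum_congr fun n => by ring)

theorem sci_mirror_Nf1_general_general (q b : ℂ)
    (hq1 : ‖q‖ < 1)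
    (hb : ‖b‖ < 1) (hqb : ‖q‖ < ‖b‖ ^ 2) :
    (∑' k : ℤ, b ^ |k| *
      (qPochInf (q ^ (1 + |k|)) q * qPochInf (b ^ 2) q) /
      (qPochInf q q * qPochInf (q ^ (1 + |k|) / b ^ 2) q) *
      phi21 (q ^ (1 + |k|) / b ^ 2) (q / b ^ 2) (q ^ (1 + |k|)) q (b ^ 2))
    = (qPochInf (b ^ 2) q / qPochInf (q / b ^ 2) q) *
      (qPochInf (q / b) q / qPochInf b q) ^ 2 := by
  have hb0 : b ≠ 0 := by
    rintro rfl
    exact (norm_nonneg q).not_gt (by simpa using hqb)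
  have hqb2 : ‖q / b ^ 2‖ < 1 := by
    rwa [norm_div, norm_pow, div_lt_one (by positivity)]
  have hv := summable_norm_qBinomialCoeff_mul_pow (q / b ^ 2) hq1 hb
  have hsum : qBinomialSeries (q / b ^ 2) q b = qPochInf (q / b) q / qPochInf b q := by
    rw [qBinomialSeries_eq _ hq1 hb, div_mul_eq_mul_div, sq, mul_div_mul_right _ _ hb0]
  simp_rw [mirror_summand_eq hq1 hqb2]
  rw [tsum_mul_left, tsum_int_tsum_natAbs_add_mul hv, ← hsum, qBinomialSeries]

theorem sci_mirror_Nf1_general (q b : ℂ)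
    (hq0 : 0 < ‖q‖) (hq1 : ‖q‖ < 1)
    (hb : ‖b‖ < 1) (hqb : ‖q‖ < ‖b‖ ^ 2) :
    (∑' k : ℤ, b ^ |k| *
      (qPochInf (q ^ (1 + |k|)) q * qPochInf (b ^ 2) q) /
      (qPochInf q q * qPochInf (q ^ (1 + |k|) / b ^ 2) q) *
      phi21 (q ^ (1 + |k|) / b ^ 2) (q / b ^ 2) (q ^ (1 + |k|)) q (b ^ 2))
    = (qPochInf (b ^ 2) q / qPochInf (q / b ^ 2) q) *
      (qPochInf (q / b) q / qPochInf b q) ^ 2 :=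
  sci_mirror_Nf1_general_general q b hq1 hb hqb
end

section
/- (Reflection lemma for the N_f = 1 index.) Let q and b be complex numbers with 0 < |q| < 1, |b| < 1 and |q| < |b|², and let k be a non-negative integer. Then b^{−k} · (b²;q)_∞ / [(q;q)_∞ (q^{1−k}/b²;q)_∞] · Σ_{n=0}^∞ (q/b²;q)_n (q^{1−k}/b²;q)_n (q^{1+n−k};q)_∞ b^{2n} / (q;q)_n = b^{k} · (b²;q)_∞ (q^{1+k};q)_∞ / [(q;q)_∞ (q^{1+k}/b²;q)_∞] · Σ_{n=0}^∞ (q^{1+k}/b²;q)_n (q/b²;q)_n b^{2n} / [(q^{1+k};q)_n (q;q)_n]. (The left-hand side is the k ↦ −k summand of the bilateral index sum, with the singular ratio (q^{1−k};q)_∞/(q^{1−k};q)_n interpreted as (q^{1+n−k};q)_∞; the lemma shows the bilateral sum over negative k equals the sum over positive k.) -/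
/-!
For `n < k` the factor `(q^{1+n-k};q)_∞` has a vanishing factor, so the left series really starts
at `n = k`. After the shift `n = m + k`, writing each `(z;q)_n` as `(z;q)_∞ / (z q^n;q)_∞` turns
both summands into the same quotient of products `(q^e;q)_∞` and `(q^e/b²;q)_∞`. These never vanish:
`e ≥ 1` in the first kind, and `|q| < |b²| < 1` keeps `b²` off the integral powers of `q`.
-/

open scoped BigOperators

theorem tsum_eq_tsum_nat_add_of_eq_zero {α : Type*} [AddCommMonoid α] [TopologicalSpace α]
    {f : ℕ → α} {k : ℕ} (hf : ∀ n < k, f n = 0) : ∑' n, f n = ∑' m, f (m + k) := by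
  refine ((add_left_injective k).tsum_eq fun n hn => ?_).symm
  exact ⟨n - k, Nat.sub_add_cancel (not_lt.mp fun h => hn (hf n h))⟩

namespace QPochhammer

variable {q : ℂ}

theorem qPochInf_ne_zero (hq : ‖q‖ < 1) {z : ℂ} (hz : ∀ j : ℕ, z * q ^ j ≠ 1) :
    qPochInf z q ≠ 0 := by
  have hsum : Summable fun j : ℕ => ‖-(z * q ^ j)‖ := by
    simpa [norm_mul, norm_pow] using
      (summable_geometric_of_lt_one (norm_nonneg q) hq).mul_left ‖z‖
  simpa [qPochInf, sub_eq_add_neg] using tprod_one_add_ne_zero_of_summable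
    (fun j => by rw [← sub_eq_add_neg, sub_ne_zero]; exact (hz j).symm) hsum

theorem qPochInf_zpow_eq_zero (hq : q ≠ 0) {e : ℤ} (he : e ≤ 0) : qPochInf (q ^ e) q = 0 :=
  tprod_of_exists_eq_zero ⟨(-e).toNat, by
    rw [← zpow_natCast, Int.toNat_of_nonneg (by omega), ← zpow_add₀ hq, add_neg_cancel,
      zpow_zero, sub_self]⟩

theorem qPochInf_zpow_ne_zero (hq0 : q ≠ 0) (hq : ‖q‖ < 1) {e : ℤ} (he : 0 < e) :
    qPochInf (q ^ e) q ≠ 0 := by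
  refine qPochInf_ne_zero hq fun j h => ?_
  rw [← zpow_natCast, ← zpow_add₀ hq0] at h
  have := zpow_lt_one₀ (norm_pos_iff.mpr hq0) hq (n := e + j) (by omega)
  rw [← norm_zpow, h, norm_one] at this
  exact lt_irrefl 1 this

theorem zpow_ne_of_norm_lt_of_lt_one (hq0 : q ≠ 0) {c : ℂ} (hqc : ‖q‖ < ‖c‖) (hc : ‖c‖ < 1)
    (e : ℤ) : q ^ e ≠ c := by
  intro h
  have hpos := norm_pos_iff.mpr hq0
  rcases le_or_gt e 0 with he | he
  · have := one_le_zpow_of_nonpos₀ hpos (hqc.trans hc).le he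
    rw [← norm_zpow, h] at this
    linarith
  · have := zpow_le_zpow_right_of_le_one₀ hpos (hqc.trans hc).le (show (1 : ℤ) ≤ e by omega)
    rw [zpow_one, ← norm_zpow, h] at this
    linarith

theorem qPochInf_zpow_div_ne_zero (hq0 : q ≠ 0) {c : ℂ} (hqc : ‖q‖ < ‖c‖) (hc : ‖c‖ < 1)
    (e : ℤ) : qPochInf (q ^ e / c) q ≠ 0 := by
  refine qPochInf_ne_zero (hqc.trans hc) fun j h => ?_
  have hc0 : c ≠ 0 := norm_pos_iff.mp ((norm_nonneg q).trans_lt hqc)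
  rw [div_mul_eq_mul_div, div_eq_one_iff_eq hc0, ← zpow_natCast, ← zpow_add₀ hq0] at h
  exact zpow_ne_of_norm_lt_of_lt_one hq0 hqc hc _ h

theorem reflection_summand {b : ℂ} (hq : q ≠ 0) (hb : b ≠ 0)
    (hQ : ∀ e : ℤ, 0 < e → qPochInf (q ^ e) q ≠ 0)
    (hP : ∀ e : ℤ, qPochInf (q ^ e / b ^ 2) q ≠ 0) (k m : ℕ) :
    b ^ (-(k : ℤ)) * qPochInf (b ^ 2) q /
      (qPochInf q q * qPochInf (q ^ (1 - (k : ℤ)) / b ^ 2) q) *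
      (qPochInt (q / b ^ 2) q ↑(m + k) * qPochInt (q ^ (1 - (k : ℤ)) / b ^ 2) q ↑(m + k) *
        qPochInf (q ^ (1 + ((m + k : ℕ) : ℤ) - (k : ℤ))) q * b ^ (2 * (m + k)) /
          qPochInt q q ↑(m + k))
    = b ^ (k : ℤ) * (qPochInf (b ^ 2) q * qPochInf (q ^ (1 + (k : ℤ))) q) /
      (qPochInf q q * qPochInf (q ^ (1 + (k : ℤ)) / b ^ 2) q) *
      (qPochInt (q ^ (1 + (k : ℤ)) / b ^ 2) q m * qPochInt (q / b ^ 2) q m *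
        b ^ (2 * m) / (qPochInt (q ^ (1 + (k : ℤ))) q m * qPochInt q q m)) := by
  simp only [qPochInt, div_mul_eq_mul_div, ← zpow_add₀ hq, ← zpow_one_add₀ hq]
  push_cast
  rw [show (1 + ((m : ℤ) + k) - k) = 1 + m by ring, show (1 - (k : ℤ) + (m + k)) = 1 + m by ring,
    show (1 + (k : ℤ) + m) = 1 + (m + k) by ring, zpow_neg, zpow_natCast,
    show 2 * (m + k) = 2 * m + k + k by ring, pow_add, pow_add]
  -- what remains is an identity of rational functions in these nonvanishing products
  have := hQ 1 one_pos
  have := hQ (1 + k) (by omega)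
  have := hQ (1 + m) (by omega)
  have := hQ (1 + (m + k)) (by omega)
  have := hP 1
  have := hP (1 - k)
  have := hP (1 + k)
  have := hP (1 + m)
  have := hP (1 + (m + k))
  simp only [zpow_one] at *
  field_simp

end QPochhammer

open QPochhammer

theorem reflection_lemma_Nf1 (q b : ℂ)
    (hq0 : 0 < ‖q‖) (hq1 : ‖q‖ < 1)
    (hb : ‖b‖ < 1) (hqb : ‖q‖ < ‖b‖ ^ 2)
    (k : ℕ) :
    b ^ (-(k : ℤ)) * qPochInf (b ^ 2) q /
      (qPochInf q q * qPochInf (q ^ (1 - (k : ℤ)) / b ^ 2) q) *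
      (∑' n : ℕ, qPochInt (q / b ^ 2) q n * qPochInt (q ^ (1 - (k : ℤ)) / b ^ 2) q n *
        qPochInf (q ^ (1 + (n : ℤ) - (k : ℤ))) q * b ^ (2 * n) / qPochInt q q n)
    = b ^ (k : ℤ) * (qPochInf (b ^ 2) q * qPochInf (q ^ (1 + (k : ℤ))) q) /
      (qPochInf q q * qPochInf (q ^ (1 + (k : ℤ)) / b ^ 2) q) *
      (∑' n : ℕ, qPochInt (q ^ (1 + (k : ℤ)) / b ^ 2) q n * qPochInt (q / b ^ 2) q n *
        b ^ (2 * n) / (qPochInt (q ^ (1 + (k : ℤ))) q n * qPochInt q q n)) := by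
  have hq : q ≠ 0 := norm_pos_iff.mp hq0
  rw [← norm_pow] at hqb
  have hb0 : b ≠ 0 := ne_zero_pow two_ne_zero (norm_pos_iff.mp (hq0.trans hqb))
  have hb2 : ‖b ^ 2‖ < 1 := by rw [norm_pow]; exact pow_lt_one₀ (norm_nonneg b) hb two_ne_zero
  rw [← tsum_mul_left, ← tsum_mul_left, tsum_eq_tsum_nat_add_of_eq_zero (k := k)]
  · exact tsum_congr fun m => reflection_summand hq hb0 (fun _ => qPochInf_zpow_ne_zero hq hq1)
      (qPochInf_zpow_div_ne_zero hq hqb hb2) k m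
  · intro n hn
    rw [qPochInf_zpow_eq_zero hq (by omega), mul_zero, zero_mul, zero_div, mul_zero]
end
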